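/- For all parameters A, B, C ∈ ℂ with C ≠ 1 and (C;q)_n ≠ 0 for all n, and all x, y ∈ ℂ with |x| < 1 and |y| < 1, the bibasic Humbert function satisfies Φ₁(A,q₁B;C;q,q₁;x,y) = Φ₁(A,B;C;q,q₁;x,y) + (xB(1−A)/(1−C))·Φ₁(qA,q₁B;qC;q,q₁;x,y). (Equation (2.11).) -/

import Mathlib

/-!
Only the factor `(B;q₁)_ℓ` differs between the two sides, and
`(q₁B;q₁)_ℓ - (B;q₁)_ℓ = B (1 - q₁^ℓ) (q₁B;q₁)_{ℓ-1}` vanishes at `ℓ = 0`. For `ℓ ≥ 1`, splitting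
`(A;q)_{ℓ+k} = (1 - A) (qA;q)_{ℓ+k-1}`, `(C;q)_{ℓ+k} = (1 - C) (qC;q)_{ℓ+k-1}` and cancelling
`1 - q₁^ℓ` against `(q₁;q₁)_ℓ` turns the difference of the two series, term by term, into
`x B (1 - A) / (1 - C)` times the `(ℓ - 1, k)` term of `Φ₁(qA, q₁B; qC)`. All series converge
absolutely because each `(z;q)_n` converges to the infinite product `(z;q)_∞`, which is nonzero
when no `(z;q)_n` vanishes; so the `q`-shifted factorials and their inverses are bounded.
-/

open Complex

/-- The q-shifted factorial (z;q)_n = prod_{r=0}^{n-1} (1 - z q^r). -/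
noncomputable def qPoch (q z : ℂ) (n : ℕ) : ℂ :=
  ∏ r ∈ Finset.range n, (1 - z * q ^ r)

/-- The bibasic Humbert hypergeometric function Φ₁ on two independent bases q and q₁. -/
noncomputable def Phi1 (q q1 A B C x y : ℂ) : ℂ :=
  ∑' p : ℕ × ℕ,
    qPoch q A (p.1 + p.2) * qPoch q1 B p.1 /
      (qPoch q C (p.1 + p.2) * qPoch q1 q1 p.1 * qPoch q q p.2) * x ^ p.1 * y ^ p.2

/-- The Jackson p-derivative. -/
noncomputable def jackson (p : ℂ) (f : ℂ → ℂ) (x : ℂ) : ℂ :=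
  (f x - f (p * x)) / ((1 - p) * x)

open Filter Topology

section QPochhammer

variable {q z : ℂ}

lemma qPoch_succ (q z : ℂ) (n : ℕ) : qPoch q z (n + 1) = qPoch q z n * (1 - z * q ^ n) :=
  Finset.prod_range_succ _ _

lemma qPoch_succ' (q z : ℂ) (n : ℕ) : qPoch q z (n + 1) = (1 - z) * qPoch q (q * z) n := by
  simp only [qPoch, Finset.prod_range_succ', pow_zero, mul_one, pow_succ]
  rw [mul_comm]
  congr 1
  exact Finset.prod_congr rfl fun r _ => by ring

lemma qPoch_mul_self_sub_qPoch (q z : ℂ) (n : ℕ) :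
    qPoch q (q * z) (n + 1) - qPoch q z (n + 1) = z * (1 - q ^ (n + 1)) * qPoch q (q * z) n := by
  rw [qPoch_succ, qPoch_succ']
  ring

lemma qPoch_ne_zero_of_norm_lt_one (hz : ‖z‖ < 1) (hq : ‖q‖ ≤ 1) (n : ℕ) : qPoch q z n ≠ 0 :=
  Finset.prod_ne_zero_iff.2 fun r _ h => by
    have : ‖z * q ^ r‖ < 1 := by
      rw [norm_mul, norm_pow]
      exact mul_lt_one_of_nonneg_of_lt_one_left (norm_nonneg z) hz (pow_le_one₀ (norm_nonneg q) hq)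
    rw [← sub_eq_zero.1 h, norm_one] at this
    exact this.false

lemma qPoch_self_ne_zero (hq : ‖q‖ < 1) (n : ℕ) : qPoch q q n ≠ 0 :=
  qPoch_ne_zero_of_norm_lt_one hq hq.le n

lemma summable_norm_mul_pow (z : ℂ) (hq : ‖q‖ < 1) : Summable fun r : ℕ => ‖-(z * q ^ r)‖ := by
  simpa [norm_mul, norm_pow] using
    (summable_geometric_of_lt_one (norm_nonneg q) hq).mul_left ‖z‖

lemma tendsto_qPoch (z : ℂ) (hq : ‖q‖ < 1) :
    Tendsto (qPoch q z) atTop (𝓝 (∏' r, (1 - z * q ^ r))) := by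
  have := (multipliable_one_add_of_summable (summable_norm_mul_pow z hq)).tendsto_prod_tprod_nat
  simp only [← sub_eq_add_neg] at this
  exact this

lemma tprod_one_sub_mul_pow_ne_zero (hq : ‖q‖ < 1) (hz : ∀ n, qPoch q z n ≠ 0) :
    ∏' r, (1 - z * q ^ r) ≠ 0 := by
  have hfactor (r : ℕ) : 1 + -(z * q ^ r) ≠ 0 := by
    have := hz (r + 1)
    rw [qPoch_succ] at this
    simpa [sub_eq_add_neg] using right_ne_zero_of_mul this
  simpa [sub_eq_add_neg] using tprod_one_add_ne_zero_of_summable hfactor (summable_norm_mul_pow z hq)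

lemma exists_norm_qPoch_le (z : ℂ) (hq : ‖q‖ < 1) : ∃ M > 0, ∀ n, ‖qPoch q z n‖ ≤ M := by
  obtain ⟨M, hM, hle⟩ := (Metric.isBounded_range_of_tendsto _ (tendsto_qPoch z hq)).exists_pos_norm_le
  exact ⟨M, hM, fun n => hle _ ⟨n, rfl⟩⟩

lemma exists_norm_inv_qPoch_le (hq : ‖q‖ < 1) (hz : ∀ n, qPoch q z n ≠ 0) :
    ∃ M > 0, ∀ n, ‖(qPoch q z n)⁻¹‖ ≤ M := by
  have hlim := (tendsto_qPoch z hq).inv₀ (tprod_one_sub_mul_pow_ne_zero hq hz)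
  obtain ⟨M, hM, hle⟩ := (Metric.isBounded_range_of_tendsto _ hlim).exists_pos_norm_le
  exact ⟨M, hM, fun n => hle _ ⟨n, rfl⟩⟩

end QPochhammer

noncomputable def phi1Term (q q1 A B C x y : ℂ) (p : ℕ × ℕ) : ℂ :=
  qPoch q A (p.1 + p.2) * qPoch q1 B p.1 /
    (qPoch q C (p.1 + p.2) * qPoch q1 q1 p.1 * qPoch q q p.2) * x ^ p.1 * y ^ p.2

lemma phi1_eq_tsum_phi1Term (q q1 A B C x y : ℂ) :
    Phi1 q q1 A B C x y = ∑' p, phi1Term q q1 A B C x y p :=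
  rfl

lemma summable_phi1Term {q q1 C x y : ℂ} (A B : ℂ) (hq : ‖q‖ < 1) (hq1 : ‖q1‖ < 1)
    (hC : ∀ n, qPoch q C n ≠ 0) (hx : ‖x‖ < 1) (hy : ‖y‖ < 1) :
    Summable (phi1Term q q1 A B C x y) := by
  obtain ⟨MA, hMA, hA⟩ := exists_norm_qPoch_le A hq
  obtain ⟨MB, hMB, hB⟩ := exists_norm_qPoch_le B hq1
  obtain ⟨MC, hMC, hCinv⟩ := exists_norm_inv_qPoch_le hq hC
  obtain ⟨M1, hM1, h1inv⟩ := exists_norm_inv_qPoch_le hq1 (qPoch_self_ne_zero hq1)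
  obtain ⟨Mq, hMq, hqinv⟩ := exists_norm_inv_qPoch_le hq (qPoch_self_ne_zero hq)
  have hgeom : Summable fun p : ℕ × ℕ => ‖x‖ ^ p.1 * ‖y‖ ^ p.2 :=
    (summable_geometric_of_lt_one (norm_nonneg x) hx).mul_of_nonneg
      (summable_geometric_of_lt_one (norm_nonneg y) hy) (fun _ => by positivity)
      (fun _ => by positivity)
  refine .of_norm_bounded (hgeom.mul_left (MA * MB * MC * M1 * Mq)) fun ⟨l, k⟩ => ?_
  simp only [phi1Term, div_eq_mul_inv, mul_inv, norm_mul, norm_pow]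
  calc _ ≤ MA * MB * (MC * M1 * Mq) * ‖x‖ ^ l * ‖y‖ ^ k := by
        gcongr
        exacts [hA _, hB _, hCinv _, h1inv _, hqinv _]
    _ = _ := by ring

lemma phi1Term_zero_left_sub (q q1 A B C x y : ℂ) (k : ℕ) :
    phi1Term q q1 A (q1 * B) C x y (0, k) - phi1Term q q1 A B C x y (0, k) = 0 := by
  simp [phi1Term, qPoch]

lemma phi1Term_succ_left_sub {q q1 C : ℂ} (A B x y : ℂ) (hq : ‖q‖ < 1) (hq1 : ‖q1‖ < 1)
    (hC : ∀ n, qPoch q C n ≠ 0) (m k : ℕ) :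
    phi1Term q q1 A (q1 * B) C x y (m + 1, k) - phi1Term q q1 A B C x y (m + 1, k) =
      x * B * (1 - A) / (1 - C) * phi1Term q q1 (q * A) (q1 * B) (q * C) x y (m, k) := by
  have hCsucc := hC (m + k + 1)
  rw [qPoch_succ'] at hCsucc
  have h1C : 1 - C ≠ 0 := left_ne_zero_of_mul hCsucc
  have hqC : qPoch q (q * C) (m + k) ≠ 0 := right_ne_zero_of_mul hCsucc
  have hq1succ := qPoch_self_ne_zero hq1 (m + 1)
  rw [qPoch_succ] at hq1succ
  have hq1m : qPoch q1 q1 m ≠ 0 := left_ne_zero_of_mul hq1succ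
  have hq1pow : 1 - q1 ^ (m + 1) ≠ 0 := by simpa [pow_succ'] using right_ne_zero_of_mul hq1succ
  have hqk := qPoch_self_ne_zero hq k
  have hB := qPoch_mul_self_sub_qPoch q1 B m
  simp only [phi1Term, show m + 1 + k = m + k + 1 by ring, qPoch_succ' q A, qPoch_succ' q C,
    qPoch_succ q1 q1, ← pow_succ']
  rw [← sub_mul, ← sub_mul, ← sub_div, ← mul_sub, hB]
  field_simp
  ring

lemma tsum_prod_eq_tsum_succ_fst {α : Type*} [AddCommMonoid α] [TopologicalSpace α]
    {f : ℕ × ℕ → α} (hf : ∀ k, f (0, k) = 0) : ∑' p, f p = ∑' p : ℕ × ℕ, f (p.1 + 1, p.2) := by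
  have hinj : Function.Injective fun p : ℕ × ℕ => (p.1 + 1, p.2) := fun a b h => by
    simpa [Prod.ext_iff] using h
  refine (hinj.tsum_eq fun p hp => ?_).symm
  obtain ⟨_ | m, k⟩ := p
  · exact absurd (hf k) hp
  · exact ⟨(m, k), rfl⟩

theorem stmt10_general (q q1 A B C x y : ℂ)
    (hq1 : ‖q‖ < 1)
    (hq11 : ‖q1‖ < 1)
    (hC : ∀ n : ℕ, qPoch q C n ≠ 0)
    (hx : ‖x‖ < 1) (hy : ‖y‖ < 1) :
    Phi1 q q1 A (q1 * B) C x y =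
      Phi1 q q1 A B C x y
        + (x * B * (1 - A) / (1 - C)) * Phi1 q q1 (q * A) (q1 * B) (q * C) x y := by
  simp only [phi1_eq_tsum_phi1Term]
  have hsub := (summable_phi1Term A (q1 * B) hq1 hq11 hC hx hy).tsum_sub
    (summable_phi1Term A B hq1 hq11 hC hx hy)
  rw [← sub_eq_iff_eq_add', ← hsub,
    tsum_prod_eq_tsum_succ_fst (phi1Term_zero_left_sub q q1 A B C x y), ← tsum_mul_left]
  exact tsum_congr fun ⟨m, k⟩ => phi1Term_succ_left_sub A B x y hq1 hq11 hC m k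

theorem stmt10 (q q1 A B C x y : ℂ)
    (hq0 : 0 < ‖q‖) (hq1 : ‖q‖ < 1)
    (hq10 : 0 < ‖q1‖) (hq11 : ‖q1‖ < 1)
    (hC : ∀ n : ℕ, qPoch q C n ≠ 0)
    (hC1 : C ≠ 1) (hx : ‖x‖ < 1) (hy : ‖y‖ < 1) :
    Phi1 q q1 A (q1 * B) C x y =
      Phi1 q q1 A B C x y
        + (x * B * (1 - A) / (1 - C)) * Phi1 q q1 (q * A) (q1 * B) (q * C) x y :=
  stmt10_general q q1 A B C x y hq1 hq11 hC hx hy
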